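/- arXiv:2209.07128 — 2 statements merged into one kernel-verified Lean document; each statement's English description precedes it below -/
import Mathlib

section
/- For every integer n ≥ 0 and every t > 0, the normalization constant h_n(t) is differentiable in t and satisfies t · h_n'(t) = −R_n(t) · h_n(t); equivalently, t · (d/dt) ln h_n(t) = −R_n(t). -/
open MeasureTheory Real Filter

/-- The singularly perturbed Laguerre-type weight `w(x;t) = x^λ e^{-x² - t/x}` on `(0,∞)`. -/
noncomputable def weight (lam t x : ℝ) : ℝ := x ^ lam * Real.exp (-x ^ 2 - t / x)

/-- The system of monic orthogonal polynomials with respect to the weight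
`w(x;t) = x^λ e^{-x² - t/x}` on `(0,∞)` (for every `t > 0`), together with the
normalization constants `h n t` and the recurrence coefficients `α n t`, `β n t`
of the three-term recurrence `x Pₙ = Pₙ₊₁ + αₙ Pₙ + βₙ Pₙ₋₁`, `P₀ = 1`, `β₀ P₋₁ = 0`. -/
structure SingLaguerreOPS (lam : ℝ) : Type where
  P : ℕ → ℝ → Polynomial ℝ
  h : ℕ → ℝ → ℝ
  α : ℕ → ℝ → ℝ
  β : ℕ → ℝ → ℝ
  /-- all moments `∫₀^∞ x^k w(x;t) dx`, `k ∈ ℤ`, converge -/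
  moments : ∀ (k : ℤ) (t : ℝ), 0 < t →
    IntegrableOn (fun x : ℝ => x ^ k * weight lam t x) (Set.Ioi (0:ℝ))
  monic : ∀ n t, 0 < t → (P n t).Monic
  natDegree_eq : ∀ n t, 0 < t → (P n t).natDegree = n
  h_pos : ∀ n t, 0 < t → 0 < h n t
  orth : ∀ m n t, 0 < t →
    ∫ x in Set.Ioi (0:ℝ), (P m t).eval x * (P n t).eval x * weight lam t x
      = if m = n then h n t else 0
  P_zero : ∀ t, 0 < t → P 0 t = 1
  recur : ∀ n t, 0 < t →
    Polynomial.X * P n t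
      = P (n+1) t + Polynomial.C (α n t) * P n t
        + Polynomial.C (β n t) * (if n = 0 then 0 else P (n-1) t)

/-- The auxiliary quantity `Rₙ(t) = (t/hₙ) ∫₀^∞ y⁻¹ Pₙ(y)² w(y;t) dy`. -/
noncomputable def Rn (lam : ℝ) (S : SingLaguerreOPS lam) (n : ℕ) (t : ℝ) : ℝ :=
  t / S.h n t * ∫ y in Set.Ioi (0:ℝ), ((S.P n t).eval y) ^ 2 * weight lam t y / y

/-- The auxiliary quantity `rₙ(t) = (t/hₙ₋₁) ∫₀^∞ y⁻¹ Pₙ(y) Pₙ₋₁(y) w(y;t) dy`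
(with the convention `P₋₁ = 0`, so `r₀ = 0`). -/
noncomputable def rn (lam : ℝ) (S : SingLaguerreOPS lam) (n : ℕ) (t : ℝ) : ℝ :=
  t / S.h (n-1) t *
    ∫ y in Set.Ioi (0:ℝ),
      (S.P n t).eval y * (if n = 0 then 0 else (S.P (n-1) t).eval y) * weight lam t y / y

/-- The derivative `v'(z) = 2z - λ/z - t/z²` of the potential `v(z) = z² + t/z - λ ln z`. -/
noncomputable def vprime (lam t z : ℝ) : ℝ := 2 * z - lam / z - t / z ^ 2


open Set

lemma weight_pos {lam t x : ℝ} (hx : 0 < x) : 0 < weight lam t x :=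
  mul_pos (Real.rpow_pos_of_pos hx lam) (Real.exp_pos _)

lemma measurable_weight (lam t : ℝ) : Measurable (weight lam t) := by
  unfold weight; fun_prop

lemma weight_le (lam : ℝ) {t t' x : ℝ} (hx : 0 < x) (h : t' ≤ t) :
    weight lam t x ≤ weight lam t' x := by
  unfold weight
  refine mul_le_mul_of_nonneg_left (Real.exp_le_exp.2 ?_) (Real.rpow_pos_of_pos hx lam).le
  have h2 : t' / x ≤ t / x := by gcongr
  linarith

lemma hasDerivAt_weight (lam : ℝ) {x : ℝ} (hx : 0 < x) (s : ℝ) :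
    HasDerivAt (fun u => weight lam u x) (-(weight lam s x / x)) s := by
  have h1 : HasDerivAt (fun u : ℝ => -x ^ 2 - u / x) (-(1 / x)) s := by
    simpa using ((hasDerivAt_id s).div_const x).const_sub (-x ^ 2)
  have h2 := (h1.exp).const_mul (x ^ lam)
  have e : -(weight lam s x / x) = x ^ lam * (Real.exp (-x ^ 2 - s / x) * -(1 / x)) := by
    unfold weight; ring
  rw [e]; exact h2

lemma integrableOn_congr_pos {f g : ℝ → ℝ}
    (h : ∀ x ∈ Set.Ioi (0:ℝ), f x = g x) (hf : IntegrableOn f (Set.Ioi 0)) :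
    IntegrableOn g (Set.Ioi 0) :=
  hf.congr_fun h measurableSet_Ioi

lemma setIntegral_congr_pos {f g : ℝ → ℝ} (h : ∀ x ∈ Set.Ioi (0:ℝ), f x = g x) :
    ∫ x in Set.Ioi (0:ℝ), f x = ∫ x in Set.Ioi (0:ℝ), g x :=
  setIntegral_congr_fun measurableSet_Ioi h

lemma integrable_poly_zpow {lam : ℝ} (S : SingLaguerreOPS lam) {t : ℝ} (ht : 0 < t)
    (p : Polynomial ℝ) (k : ℤ) :
    IntegrableOn (fun x => p.eval x * (x ^ k * weight lam t x)) (Set.Ioi 0) := by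
  induction p using Polynomial.induction_on' with
  | add f g hf hg =>
      refine integrableOn_congr_pos (fun x hx => ?_) (hf.add hg)
      simp [Polynomial.eval_add, add_mul]
  | monomial i a =>
      have h1 : IntegrableOn (fun x : ℝ => a * (x ^ ((i : ℤ) + k) * weight lam t x))
          (Set.Ioi 0) := (S.moments ((i:ℤ) + k) t ht).const_mul a
      refine integrableOn_congr_pos (fun x hx => ?_) h1
      have hx0 : (x:ℝ) ≠ 0 := ne_of_gt hx
      rw [Polynomial.eval_monomial, zpow_add₀ hx0, zpow_natCast]
      ring

lemma integrable_pq {lam : ℝ} (S : SingLaguerreOPS lam) {t : ℝ} (ht : 0 < t)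
    (p r : Polynomial ℝ) :
    IntegrableOn (fun x => p.eval x * r.eval x * weight lam t x) (Set.Ioi 0) := by
  refine integrableOn_congr_pos (fun x hx => ?_) (integrable_poly_zpow S ht (p * r) 0)
  simp [Polynomial.eval_mul]

lemma integrable_pq_div1 {lam : ℝ} (S : SingLaguerreOPS lam) {t : ℝ} (ht : 0 < t)
    (p r : Polynomial ℝ) :
    IntegrableOn (fun x => p.eval x * r.eval x * weight lam t x / x) (Set.Ioi 0) := by
  refine integrableOn_congr_pos (fun x hx => ?_) (integrable_poly_zpow S ht (p * r) (-1))
  have hx0 : (x:ℝ) ≠ 0 := ne_of_gt hx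
  rw [Polynomial.eval_mul, zpow_neg, zpow_one]
  field_simp

lemma integrable_pq_div2 {lam : ℝ} (S : SingLaguerreOPS lam) {t : ℝ} (ht : 0 < t)
    (p r : Polynomial ℝ) :
    IntegrableOn (fun x => p.eval x * r.eval x * weight lam t x / x ^ 2) (Set.Ioi 0) := by
  refine integrableOn_congr_pos (fun x hx => ?_) (integrable_poly_zpow S ht (p * r) (-2))
  have hx0 : (x:ℝ) ≠ 0 := ne_of_gt hx
  have h2 : (x:ℝ) ^ (-2 : ℤ) = (x ^ 2)⁻¹ := by
    rw [zpow_neg]; norm_cast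
  rw [Polynomial.eval_mul, h2]
  field_simp

lemma integrable_sq {lam : ℝ} (S : SingLaguerreOPS lam) {t : ℝ} (ht : 0 < t)
    (p : Polynomial ℝ) :
    IntegrableOn (fun x => (p.eval x) ^ 2 * weight lam t x) (Set.Ioi 0) := by
  refine integrableOn_congr_pos (fun x hx => ?_) (integrable_pq S ht p p)
  ring

lemma integrable_sq_div1 {lam : ℝ} (S : SingLaguerreOPS lam) {t : ℝ} (ht : 0 < t)
    (p : Polynomial ℝ) :
    IntegrableOn (fun x => (p.eval x) ^ 2 * weight lam t x / x) (Set.Ioi 0) := by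
  refine integrableOn_congr_pos (fun x hx => ?_) (integrable_pq_div1 S ht p p)
  ring

lemma orth_lower {lam : ℝ} (S : SingLaguerreOPS lam) {t : ℝ} (ht : 0 < t) (n : ℕ) :
    ∀ (k : ℕ) (r : Polynomial ℝ), r.natDegree ≤ k → r.degree < (n : WithBot ℕ) →
      ∫ x in Set.Ioi (0:ℝ), r.eval x * (S.P n t).eval x * weight lam t x = 0 := by
  intro k
  induction k using Nat.strong_induction_on with
  | _ k ih =>
    intro r hrk hrn
    by_cases hr : r = 0
    · simp [hr]
    have hdm : r.degree = (r.natDegree : WithBot ℕ) := Polynomial.degree_eq_natDegree hr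
    have hmn : r.natDegree < n := by
      rw [hdm] at hrn; exact_mod_cast hrn
    set m := r.natDegree with hm
    have hPm : S.P m t ≠ 0 := (S.monic m t ht).ne_zero
    set r' := r - Polynomial.C r.leadingCoeff * S.P m t with hr'
    have hdegP : (S.P m t).degree = (m : WithBot ℕ) := by
      rw [Polynomial.degree_eq_natDegree hPm, S.natDegree_eq m t ht]
    have hlc : r.leadingCoeff ≠ 0 := Polynomial.leadingCoeff_ne_zero.mpr hr
    have hdeg' : r'.degree < r.degree := by
      refine Polynomial.degree_sub_lt ?_ hr ?_
      · rw [Polynomial.degree_C_mul hlc, hdegP, hdm]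
      · rw [Polynomial.leadingCoeff_mul, Polynomial.leadingCoeff_C,
          (S.monic m t ht).leadingCoeff, mul_one]
    have hint1 : IntegrableOn (fun x => r'.eval x * (S.P n t).eval x * weight lam t x)
        (Set.Ioi 0) := integrable_pq S ht r' (S.P n t)
    have hint2 : IntegrableOn
        (fun x => r.leadingCoeff * ((S.P m t).eval x * (S.P n t).eval x * weight lam t x))
        (Set.Ioi 0) := (integrable_pq S ht (S.P m t) (S.P n t)).const_mul _
    have key : (fun x => r.eval x * (S.P n t).eval x * weight lam t x)
        = fun x => r'.eval x * (S.P n t).eval x * weight lam t x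
          + r.leadingCoeff * ((S.P m t).eval x * (S.P n t).eval x * weight lam t x) := by
      funext x
      have hx : r.eval x = r'.eval x + r.leadingCoeff * (S.P m t).eval x := by
        rw [hr']; simp
      rw [hx]; ring
    have hr'int : ∫ x in Set.Ioi (0:ℝ), r'.eval x * (S.P n t).eval x * weight lam t x = 0 := by
      by_cases hr'0 : r' = 0
      · simp [hr'0]
      · have hlt : r'.natDegree < m := Polynomial.natDegree_lt_natDegree hr'0 hdeg'
        exact ih r'.natDegree (lt_of_lt_of_le hlt hrk) r' le_rfl
          (lt_trans (hdm ▸ hdeg') hrn)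
    have horth : ∫ x in Set.Ioi (0:ℝ),
        (S.P m t).eval x * (S.P n t).eval x * weight lam t x = 0 := by
      have h0 := S.orth m n t ht
      rwa [if_neg (Nat.ne_of_lt hmn)] at h0
    rw [key, integral_add hint1 hint2, hr'int, integral_const_mul, horth]
    ring

lemma exp_sq_bound (a : ℝ) : (1 - Real.exp (-a)) ^ 2 * Real.exp a ≤ a ^ 2 * Real.exp |a| := by
  have hhalf : (1 - Real.exp (-a)) ^ 2 * Real.exp a
      = (Real.exp (a/2) - Real.exp (-(a/2))) ^ 2 := by
    have e1 : Real.exp a = Real.exp (a/2) * Real.exp (a/2) := by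
      rw [← Real.exp_add]; ring_nf
    have e2 : Real.exp (-a) = Real.exp (-(a/2)) * Real.exp (-(a/2)) := by
      rw [← Real.exp_add]; ring_nf
    have e3 : Real.exp (-(a/2)) * Real.exp (a/2) = 1 := by
      rw [← Real.exp_add]; simp
    rw [e1, e2]
    linear_combination (((Real.exp (-(a/2)))^2 - 2) * (Real.exp (-(a/2)) * Real.exp (a/2)) + (Real.exp (-(a/2)))^2) * e3
  rw [hhalf]
  rcases le_total 0 a with ha | ha
  · have h1 : 0 ≤ Real.exp (a/2) - Real.exp (-(a/2)) := by
      have hha : -(a/2) ≤ a/2 := by linarith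
      linarith [Real.exp_le_exp.2 hha]
    have h2 : Real.exp (a/2) - Real.exp (-(a/2)) ≤ a * Real.exp (a/2) := by
      have hb : 1 - Real.exp (-a) ≤ a := by
        have := Real.add_one_le_exp (-a); linarith
      have hrw : Real.exp (a/2) - Real.exp (-(a/2)) = Real.exp (a/2) * (1 - Real.exp (-a)) := by
        rw [mul_sub, mul_one, ← Real.exp_add]; ring_nf
      rw [hrw]
      calc Real.exp (a/2) * (1 - Real.exp (-a)) ≤ Real.exp (a/2) * a :=
            mul_le_mul_of_nonneg_left hb (Real.exp_pos _).le
        _ = a * Real.exp (a/2) := by ring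
    have h3 : (Real.exp (a/2) - Real.exp (-(a/2))) ^ 2 ≤ (a * Real.exp (a/2)) ^ 2 :=
      pow_le_pow_left₀ h1 h2 2
    calc (Real.exp (a/2) - Real.exp (-(a/2))) ^ 2 ≤ (a * Real.exp (a/2)) ^ 2 := h3
      _ = a ^ 2 * Real.exp a := by
          have e : a/2 + a/2 = a := by ring
          rw [mul_pow, pow_two (Real.exp (a/2)), ← Real.exp_add, e]
      _ ≤ a ^ 2 * Real.exp |a| := by
          exact mul_le_mul_of_nonneg_left (Real.exp_le_exp.2 (le_abs_self a)) (sq_nonneg a)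
  · have h1 : 0 ≤ Real.exp (-(a/2)) - Real.exp (a/2) := by
      have hha : a/2 ≤ -(a/2) := by linarith
      linarith [Real.exp_le_exp.2 hha]
    have h2 : Real.exp (-(a/2)) - Real.exp (a/2) ≤ (-a) * Real.exp (-(a/2)) := by
      have hb : 1 - Real.exp a ≤ -a := by
        have := Real.add_one_le_exp a; linarith
      have hrw : Real.exp (-(a/2)) - Real.exp (a/2) = Real.exp (-(a/2)) * (1 - Real.exp a) := by
        rw [mul_sub, mul_one, ← Real.exp_add]; ring_nf
      rw [hrw]
      calc Real.exp (-(a/2)) * (1 - Real.exp a) ≤ Real.exp (-(a/2)) * (-a) :=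
            mul_le_mul_of_nonneg_left hb (Real.exp_pos _).le
        _ = (-a) * Real.exp (-(a/2)) := by ring
    have h3 : (Real.exp (-(a/2)) - Real.exp (a/2)) ^ 2 ≤ ((-a) * Real.exp (-(a/2))) ^ 2 :=
      pow_le_pow_left₀ h1 h2 2
    calc (Real.exp (a/2) - Real.exp (-(a/2))) ^ 2
        = (Real.exp (-(a/2)) - Real.exp (a/2)) ^ 2 := by ring
      _ ≤ ((-a) * Real.exp (-(a/2))) ^ 2 := h3
      _ = a ^ 2 * Real.exp (-a) := by
          have e : -(a/2) + -(a/2) = -a := by ring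
          rw [mul_pow, pow_two (Real.exp (-(a/2))), ← Real.exp_add, e, neg_sq]
      _ ≤ a ^ 2 * Real.exp |a| := by
          exact mul_le_mul_of_nonneg_left (Real.exp_le_exp.2 (neg_le_abs a)) (sq_nonneg a)

lemma pointwise_bound (lam : ℝ) {t s x : ℝ} (hx : 0 < x)
    (hst : |s - t| ≤ t / 2) (u v : ℝ) :
    |u * v * (weight lam t x - weight lam s x)| ≤
      1/2 * (u * u * weight lam s x)
        + 1/2 * ((s - t) ^ 2 * (v * v * weight lam (t/2) x / x ^ 2)) := by
  set A := weight lam s x with hA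
  have hApos : 0 < A := weight_pos hx
  set D := weight lam t x - weight lam s x with hD
  have step1 : |u * v * D| ≤ 1/2 * (u * u * A) + 1/2 * (v * v * (D^2 / A)) := by
    have hnum : 0 ≤ u^2 * A^2 + v^2 * D^2 - 2 * A * |u * v * D| := by
      have h0 : (0:ℝ) ≤ (|u| * A - |v| * |D|)^2 := sq_nonneg _
      have habs : |u * v * D| = |u| * |v| * |D| := by rw [abs_mul, abs_mul]
      nlinarith [sq_abs u, sq_abs v, sq_abs D]
    have heq : 1/2 * (u * u * A) + 1/2 * (v * v * (D^2 / A))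
        = |u * v * D| + (u^2 * A^2 + v^2 * D^2 - 2 * A * |u * v * D|) / (2 * A) := by
      field_simp; ring
    rw [heq]
    have := div_nonneg hnum (by linarith : (0:ℝ) ≤ 2 * A)
    linarith
  have step2 : D^2 / A ≤ (s - t)^2 * weight lam (t/2) x / x^2 := by
    set a := (s - t) / x with ha
    have hx0 : x ≠ 0 := ne_of_gt hx
    have hws : weight lam s x = weight lam t x * Real.exp (-a) := by
      unfold weight
      rw [mul_assoc, ← Real.exp_add]
      congr 2
      rw [ha]; ring
    have hwt : 0 < weight lam t x := weight_pos hx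
    have hDA : D^2 / A = weight lam t x * ((1 - Real.exp (-a))^2 * Real.exp a) := by
      rw [hD, hA, hws]
      rw [div_eq_iff (by positivity : weight lam t x * Real.exp (-a) ≠ 0)]
      have hee : Real.exp (-a) * Real.exp a = 1 := by rw [← Real.exp_add]; simp
      nlinarith [hee, sq_nonneg (1 - Real.exp (-a))]
    rw [hDA]
    have hb := exp_sq_bound a
    have hchain : weight lam t x * ((1 - Real.exp (-a))^2 * Real.exp a)
        ≤ weight lam t x * (a^2 * Real.exp |a|) :=
      mul_le_mul_of_nonneg_left hb hwt.le
    refine hchain.trans ?_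
    have haa : a^2 = (s - t)^2 / x^2 := by rw [ha, div_pow]
    have habs : |a| = |s - t| / x := by rw [ha, abs_div, abs_of_pos hx]
    have hwexp : weight lam t x * Real.exp |a| ≤ weight lam (t/2) x := by
      unfold weight
      rw [mul_assoc, ← Real.exp_add]
      refine mul_le_mul_of_nonneg_left (Real.exp_le_exp.2 ?_) (Real.rpow_pos_of_pos hx lam).le
      rw [habs]
      have hdd : |s - t| / x ≤ (t/2) / x := by gcongr
      have h2 : -x^2 - t/x + |s - t|/x ≤ -x^2 - t/x + (t/2)/x := by linarith
      refine h2.trans (le_of_eq ?_)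
      field_simp; ring
    calc weight lam t x * (a^2 * Real.exp |a|)
        = a^2 * (weight lam t x * Real.exp |a|) := by ring
      _ ≤ a^2 * weight lam (t/2) x := mul_le_mul_of_nonneg_left hwexp (sq_nonneg a)
      _ = (s - t)^2 * weight lam (t/2) x / x^2 := by rw [haa]; ring
  calc |u * v * D| ≤ 1/2 * (u * u * A) + 1/2 * (v * v * (D^2 / A)) := step1
    _ ≤ 1/2 * (u * u * A) + 1/2 * (v * v * ((s - t)^2 * weight lam (t/2) x / x^2)) := by
        have h3 : v * v * (D^2/A) ≤ v * v * ((s - t)^2 * weight lam (t/2) x / x^2) :=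
          mul_le_mul_of_nonneg_left step2 (mul_self_nonneg v)
        linarith
    _ = 1/2 * (u * u * A) + 1/2 * ((s - t)^2 * (v * v * weight lam (t/2) x / x^2)) := by ring

lemma hasDerivAt_Phi {lam : ℝ} (S : SingLaguerreOPS lam) {t : ℝ} (ht : 0 < t)
    (p : Polynomial ℝ) :
    HasDerivAt (fun s => ∫ x in Set.Ioi (0:ℝ), (p.eval x) ^ 2 * weight lam s x)
      (-∫ x in Set.Ioi (0:ℝ), (p.eval x) ^ 2 * weight lam t x / x) t := by
  have hmeas : ∀ s : ℝ, AEStronglyMeasurable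
      (fun x => (p.eval x) ^ 2 * weight lam s x) (volume.restrict (Set.Ioi (0:ℝ))) := by
    intro s
    exact ((p.continuous.measurable).pow_const 2 |>.mul (measurable_weight lam s)).aestronglyMeasurable
  have hmeas' : AEStronglyMeasurable
      (fun x => -((p.eval x) ^ 2 * weight lam t x / x)) (volume.restrict (Set.Ioi (0:ℝ))) := by
    exact ((((p.continuous.measurable).pow_const 2 |>.mul (measurable_weight lam t)).div
      measurable_id).neg).aestronglyMeasurable
  have key := hasDerivAt_integral_of_dominated_loc_of_deriv_le
    (μ := volume.restrict (Set.Ioi (0:ℝ))) (x₀ := t) (s := Metric.ball t (t/2))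
    (F := fun s x => (p.eval x) ^ 2 * weight lam s x)
    (F' := fun s x => -((p.eval x) ^ 2 * weight lam s x / x))
    (bound := fun x => (p.eval x) ^ 2 * weight lam (t/2) x / x)
    (Metric.ball_mem_nhds t (half_pos ht))
    (Filter.Eventually.of_forall hmeas)
    (integrable_sq S ht p)
    hmeas'
    ?_ (integrable_sq_div1 S (half_pos ht) p) ?_
  · have h2 := key.2
    rwa [integral_neg] at h2
  · rw [ae_restrict_iff' measurableSet_Ioi]
    refine Filter.Eventually.of_forall (fun x hx => ?_)
    intro s hs
    have hx' : (0:ℝ) < x := hx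
    rw [Metric.mem_ball, Real.dist_eq] at hs
    have hs2 : t/2 ≤ s := by
      have := abs_lt.1 hs
      linarith [this.1]
    rw [Real.norm_eq_abs, abs_neg, abs_of_nonneg
      (div_nonneg (mul_nonneg (sq_nonneg _) (weight_pos hx').le) hx'.le)]
    have hw : (p.eval x) ^ 2 * weight lam s x ≤ (p.eval x) ^ 2 * weight lam (t/2) x :=
      mul_le_mul_of_nonneg_left (weight_le lam hx' hs2) (sq_nonneg _)
    exact div_le_div_of_nonneg_right hw hx'.le
  · rw [ae_restrict_iff' measurableSet_Ioi]
    refine Filter.Eventually.of_forall (fun x hx => ?_)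
    intro s _
    have hx' : (0:ℝ) < x := hx
    have hd := (hasDerivAt_weight lam hx' s).const_mul ((p.eval x) ^ 2)
    exact hd.congr_deriv (by ring)

lemma hPhi_bound {lam : ℝ} (S : SingLaguerreOPS lam) {t : ℝ} (ht : 0 < t) (n : ℕ)
    {s : ℝ} (hst : |s - t| ≤ t / 2) :
    |S.h n s - ∫ x in Set.Ioi (0:ℝ), ((S.P n t).eval x) ^ 2 * weight lam s x|
      ≤ (∫ x in Set.Ioi (0:ℝ),
          (S.P n t).eval x * (S.P n t).eval x * weight lam (t/2) x / x ^ 2) * (s - t) ^ 2 := by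
  have hs0 : 0 < s := by
    have := abs_le.1 hst
    linarith [this.1]
  set P0 := S.P n t with hP0
  set q := S.P n s - P0 with hqdef
  have iqq : IntegrableOn (fun x => q.eval x * q.eval x * weight lam s x) (Set.Ioi 0) :=
    integrable_pq S hs0 q q
  have iqP : IntegrableOn (fun x => q.eval x * P0.eval x * weight lam s x) (Set.Ioi 0) :=
    integrable_pq S hs0 q P0
  have iqPt : IntegrableOn (fun x => q.eval x * P0.eval x * weight lam t x) (Set.Ioi 0) :=
    integrable_pq S ht q P0
  have iPP : IntegrableOn (fun x => P0.eval x * P0.eval x * weight lam s x) (Set.Ioi 0) :=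
    integrable_pq S hs0 P0 P0
  have iW : IntegrableOn (fun x => P0.eval x * P0.eval x * weight lam (t/2) x / x ^ 2)
      (Set.Ioi 0) := integrable_pq_div2 S (half_pos ht) P0 P0
  have hdeg_s : (S.P n s).degree = (n : WithBot ℕ) := by
    rw [Polynomial.degree_eq_natDegree (S.monic n s hs0).ne_zero, S.natDegree_eq n s hs0]
  have hdeg_t : P0.degree = (n : WithBot ℕ) := by
    rw [Polynomial.degree_eq_natDegree (S.monic n t ht).ne_zero, S.natDegree_eq n t ht]
  have hqdeg : q.degree < (n : WithBot ℕ) := by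
    have hlt := Polynomial.degree_sub_lt (hdeg_s.trans hdeg_t.symm) (S.monic n s hs0).ne_zero
      (by rw [(S.monic n s hs0).leadingCoeff, (S.monic n t ht).leadingCoeff])
    rw [hdeg_s] at hlt
    exact hlt
  have O1 := orth_lower S hs0 n q.natDegree q le_rfl hqdeg
  have O2 := orth_lower S ht n q.natDegree q le_rfl hqdeg
  have hev : ∀ x : ℝ, (S.P n s).eval x = P0.eval x + q.eval x := by
    intro x; rw [hqdef]; simp
  set A := ∫ x in Set.Ioi (0:ℝ), q.eval x * q.eval x * weight lam s x with hAdef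
  set B := ∫ x in Set.Ioi (0:ℝ), q.eval x * P0.eval x * weight lam s x with hBdef
  have hBA : B + A = 0 := by
    have hsum : B + A = ∫ x in Set.Ioi (0:ℝ),
        q.eval x * (S.P n s).eval x * weight lam s x := by
      rw [hBdef, hAdef, ← integral_add iqP iqq]
      refine setIntegral_congr_pos (fun x hx => ?_)
      rw [hev x]; ring
    rw [hsum, O1]
  have hhs : S.h n s
      = (∫ x in Set.Ioi (0:ℝ), P0.eval x * P0.eval x * weight lam s x) + (2 * B + A) := by
    have horth := S.orth n n s hs0
    rw [if_pos rfl] at horth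
    rw [← horth]
    have e0 : ∫ x in Set.Ioi (0:ℝ), (S.P n s).eval x * (S.P n s).eval x * weight lam s x
        = ∫ x in Set.Ioi (0:ℝ), (P0.eval x * P0.eval x * weight lam s x
          + (2 * (q.eval x * P0.eval x * weight lam s x)
            + q.eval x * q.eval x * weight lam s x)) := by
      refine setIntegral_congr_pos (fun x hx => ?_)
      rw [hev x]; ring
    have i2 : IntegrableOn (fun x => 2 * (q.eval x * P0.eval x * weight lam s x)
        + q.eval x * q.eval x * weight lam s x) (Set.Ioi 0) := by
      exact (iqP.const_mul 2).add iqq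
    rw [e0, integral_add iPP i2, integral_add (iqP.const_mul 2) iqq, integral_const_mul]
  have hPhiEq : (∫ x in Set.Ioi (0:ℝ), (P0.eval x) ^ 2 * weight lam s x)
      = ∫ x in Set.Ioi (0:ℝ), P0.eval x * P0.eval x * weight lam s x := by
    simp only [pow_two]
  have hdiff : S.h n s - (∫ x in Set.Ioi (0:ℝ), (P0.eval x) ^ 2 * weight lam s x) = -A := by
    rw [hPhiEq, hhs]; linarith [hBA]
  have hA0 : 0 ≤ A := by
    rw [hAdef]
    refine setIntegral_nonneg measurableSet_Ioi (fun x hx => ?_)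
    exact mul_nonneg (mul_self_nonneg _) (weight_pos hx).le
  set C := ∫ x in Set.Ioi (0:ℝ), P0.eval x * P0.eval x * weight lam (t/2) x / x ^ 2 with hCdef
  have hAint : A = ∫ x in Set.Ioi (0:ℝ),
      q.eval x * P0.eval x * (weight lam t x - weight lam s x) := by
    have h1 : A = (∫ x in Set.Ioi (0:ℝ), q.eval x * P0.eval x * weight lam t x) - B := by
      rw [O2]; linarith [hBA]
    rw [h1, hBdef, ← integral_sub iqPt iqP]
    refine setIntegral_congr_pos (fun x hx => ?_)
    ring
  have hbound : A ≤ 1/2 * A + 1/2 * ((s - t) ^ 2 * C) := by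
    have hf_int : IntegrableOn
        (fun x => q.eval x * P0.eval x * (weight lam t x - weight lam s x)) (Set.Ioi 0) := by
      refine integrableOn_congr_pos (fun x hx => ?_) (iqPt.sub iqP)
      simp only [Pi.sub_apply]; ring
    have step1 : A ≤ ∫ x in Set.Ioi (0:ℝ),
        |q.eval x * P0.eval x * (weight lam t x - weight lam s x)| := by
      rw [hAint]
      calc (∫ x in Set.Ioi (0:ℝ), q.eval x * P0.eval x * (weight lam t x - weight lam s x))
          ≤ |∫ x in Set.Ioi (0:ℝ), q.eval x * P0.eval x * (weight lam t x - weight lam s x)| :=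
            le_abs_self _
        _ ≤ _ := by
            simpa only [Real.norm_eq_abs] using norm_integral_le_integral_norm
              (μ := volume.restrict (Set.Ioi (0:ℝ)))
              (fun x => q.eval x * P0.eval x * (weight lam t x - weight lam s x))
    have i3 : IntegrableOn (fun x => 1/2 * (q.eval x * q.eval x * weight lam s x))
        (Set.Ioi 0) := by exact iqq.const_mul _
    have i4 : IntegrableOn
        (fun x => 1/2 * ((s - t) ^ 2 * (P0.eval x * P0.eval x * weight lam (t/2) x / x ^ 2)))
        (Set.Ioi 0) := by exact (iW.const_mul _).const_mul _
    have g_int : IntegrableOn (fun x => 1/2 * (q.eval x * q.eval x * weight lam s x)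
        + 1/2 * ((s - t) ^ 2 * (P0.eval x * P0.eval x * weight lam (t/2) x / x ^ 2)))
        (Set.Ioi 0) := by exact i3.add i4
    have step2 : (∫ x in Set.Ioi (0:ℝ),
          |q.eval x * P0.eval x * (weight lam t x - weight lam s x)|)
        ≤ ∫ x in Set.Ioi (0:ℝ), (1/2 * (q.eval x * q.eval x * weight lam s x)
          + 1/2 * ((s - t) ^ 2 * (P0.eval x * P0.eval x * weight lam (t/2) x / x ^ 2))) := by
      refine integral_mono_ae hf_int.abs g_int ?_
      rw [Filter.EventuallyLE, ae_restrict_iff' measurableSet_Ioi]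
      refine Filter.Eventually.of_forall (fun x hx => ?_)
      exact pointwise_bound lam hx hst (q.eval x) (P0.eval x)
    have hsum : (∫ x in Set.Ioi (0:ℝ), (1/2 * (q.eval x * q.eval x * weight lam s x)
          + 1/2 * ((s - t) ^ 2 * (P0.eval x * P0.eval x * weight lam (t/2) x / x ^ 2))))
        = 1/2 * A + 1/2 * ((s - t) ^ 2 * C) := by
      rw [integral_add i3 i4, integral_const_mul, integral_const_mul, integral_const_mul,
        ← hAdef, ← hCdef]
    calc A ≤ _ := step1
      _ ≤ _ := step2
      _ = _ := hsum
  have hAle : A ≤ (s - t) ^ 2 * C := by linarith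
  rw [hdiff, abs_neg, abs_of_nonneg hA0]
  calc A ≤ (s - t) ^ 2 * C := hAle
    _ = C * (s - t) ^ 2 := by ring

theorem statement14 (lam t : ℝ) (hlam : 0 ≤ lam) (ht : 0 < t)
    (S : SingLaguerreOPS lam) (n : ℕ) :
    ∃ d : ℝ, HasDerivAt (S.h n) d t ∧ t * d = -(Rn lam S n t) * S.h n t := by
  set I := ∫ x in Set.Ioi (0:ℝ), ((S.P n t).eval x) ^ 2 * weight lam t x / x with hIdef
  refine ⟨-I, ?_, ?_⟩
  · -- differentiability
    set Φ := fun s => ∫ x in Set.Ioi (0:ℝ), ((S.P n t).eval x) ^ 2 * weight lam s x with hΦdef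
    have hΦd : HasDerivAt Φ (-I) t := hasDerivAt_Phi S ht (S.P n t)
    have hht : S.h n t = Φ t := by
      have horth := S.orth n n t ht
      rw [if_pos rfl] at horth
      rw [hΦdef, ← horth]
      simp only [pow_two]
    set C := ∫ x in Set.Ioi (0:ℝ),
      (S.P n t).eval x * (S.P n t).eval x * weight lam (t/2) x / x ^ 2 with hCdef
    have hBigO : (fun s => S.h n s - Φ s) =O[nhds t] fun s => (s - t) ^ 2 := by
      rw [Asymptotics.isBigO_iff]
      refine ⟨C, ?_⟩
      filter_upwards [Metric.ball_mem_nhds t (half_pos ht)] with s hs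
      rw [Metric.mem_ball, Real.dist_eq] at hs
      have hb := hPhi_bound S ht n (le_of_lt hs)
      rw [Real.norm_eq_abs, Real.norm_eq_abs, abs_of_nonneg (sq_nonneg (s - t))]
      exact hb
    have hsq : (fun s : ℝ => (s - t) ^ 2) =o[nhds t] fun s => s - t := by
      have h1 : (fun s : ℝ => s - t) =o[nhds t] (fun _ => (1:ℝ)) := by
        rw [Asymptotics.isLittleO_one_iff]
        have : Filter.Tendsto (fun s : ℝ => s - t) (nhds t) (nhds (t - t)) :=
          (continuous_id.sub continuous_const).tendsto t
        simpa using this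
      have h2 := h1.mul_isBigO (Asymptotics.isBigO_refl (fun s : ℝ => s - t) (nhds t))
      refine h2.congr (fun s => by ring) (fun s => by ring)
    have h2 : (fun s => S.h n s - Φ s) =o[nhds t] fun s => s - t :=
      hBigO.trans_isLittleO hsq
    rw [hasDerivAt_iff_isLittleO]
    have h1 := hasDerivAt_iff_isLittleO.1 hΦd
    have heq : (fun s => S.h n s - S.h n t - (s - t) • (-I))
        = fun s => (Φ s - Φ t - (s - t) • (-I)) + (S.h n s - Φ s) := by
      funext s
      rw [hht]
      simp only [smul_eq_mul]
      ring
    rw [heq]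
    exact h1.add h2
  · -- the identity
    have hh := S.h_pos n t ht
    rw [Rn, ← hIdef]
    field_simp
end

section
/- (Theorem 2, first equation) For every integer n ≥ 1 and every t > 0, the recurrence coefficient α_n(t) is differentiable in t and satisfies the differential-difference equation t · α_n'(t) = α_n(t) + 2β_n(t)(α_n(t) + α_{n−1}(t)) − 2β_{n+1}(t)(α_n(t) + α_{n+1}(t)). -/
open MeasureTheory Real Filter

namespace SP
open Set Polynomial

noncomputable def mom (lam : ℝ) (k : ℤ) (t : ℝ) : ℝ :=
  ∫ x in Set.Ioi (0:ℝ), x ^ k * weight lam t x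

lemma weight_pos (lam t : ℝ) {x : ℝ} (hx : 0 < x) : 0 < weight lam t x :=
  mul_pos (Real.rpow_pos_of_pos hx lam) (Real.exp_pos _)

lemma weight_le (lam : ℝ) {s t x : ℝ} (hst : s ≤ t) (hx : 0 < x) :
    weight lam t x ≤ weight lam s x := by
  have h1 : s / x ≤ t / x := by gcongr
  unfold weight
  exact mul_le_mul_of_nonneg_left (Real.exp_le_exp.2 (by linarith))
    (Real.rpow_pos_of_pos hx lam).le

lemma weight_continuousOn (lam t : ℝ) :
    ContinuousOn (weight lam t) (Set.Ioi (0:ℝ)) := by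
  intro x hx
  have hx0 : (x:ℝ) ≠ 0 := (ne_of_gt hx)
  apply ContinuousAt.continuousWithinAt
  exact ((Real.continuousAt_rpow_const x lam (Or.inl hx0)).mul
    ((Real.continuous_exp.continuousAt).comp
      (((continuous_pow 2).continuousAt.neg).sub
        ((continuousAt_const).div continuousAt_id hx0))))

variable {lam : ℝ}

/-- abbreviation for the integrability hypothesis -/
def MomOK (lam : ℝ) : Prop := ∀ (k : ℤ) (t : ℝ), 0 < t →
    IntegrableOn (fun x : ℝ => x ^ k * weight lam t x) (Set.Ioi (0:ℝ))

lemma poly_expand (q : Polynomial ℝ) (k : ℤ) {x : ℝ} (hx : 0 < x) (w : ℝ) :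
    q.eval x * (x ^ k * w)
      = ∑ j ∈ Finset.range (q.natDegree+1), q.coeff j * (x ^ ((j:ℤ)+k) * w) := by
  rw [Polynomial.eval_eq_sum_range, Finset.sum_mul]
  refine Finset.sum_congr rfl fun j _ => ?_
  rw [zpow_add₀ hx.ne', zpow_natCast]
  ring

lemma integrableOn_poly (hmom : MomOK lam) (q : Polynomial ℝ) (k : ℤ) {t : ℝ} (ht : 0 < t) :
    IntegrableOn (fun x => q.eval x * (x ^ k * weight lam t x)) (Set.Ioi (0:ℝ)) := by
  apply IntegrableOn.congr_fun (f := fun x =>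
    ∑ j ∈ Finset.range (q.natDegree+1), q.coeff j * (x ^ ((j:ℤ)+k) * weight lam t x))
  · exact integrable_finset_sum _ fun j _ => (hmom ((j:ℤ)+k) t ht).const_mul (q.coeff j)
  · exact fun x hx => (poly_expand q k hx _).symm
  · exact measurableSet_Ioi

lemma integral_poly (hmom : MomOK lam) (q : Polynomial ℝ) (k : ℤ) {t : ℝ} (ht : 0 < t) :
    ∫ x in Set.Ioi (0:ℝ), q.eval x * (x ^ k * weight lam t x)
      = ∑ j ∈ Finset.range (q.natDegree+1), q.coeff j * mom lam ((j:ℤ)+k) t := by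
  rw [setIntegral_congr_fun measurableSet_Ioi (fun x hx => poly_expand q k hx _),
    integral_finset_sum]
  · simp only [mom, integral_smul]
    refine Finset.sum_congr rfl fun j _ => ?_
    rw [← integral_const_mul]
  · exact fun j _ => (hmom ((j:ℤ)+k) t ht).const_mul (q.coeff j)

lemma weight_aesm (lam t : ℝ) (k : ℤ) :
    AEStronglyMeasurable (fun x : ℝ => x ^ k * weight lam t x)
      (volume.restrict (Set.Ioi (0:ℝ))) := by
  apply ContinuousOn.aestronglyMeasurable _ measurableSet_Ioi
  intro x hx
  exact ((continuousAt_zpow₀ x k (Or.inl (ne_of_gt hx))).continuousWithinAt).mul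
    (weight_continuousOn lam t x hx)

lemma hasDerivAt_weight_param {x : ℝ} (hx : 0 < x) (lam s : ℝ) :
    HasDerivAt (fun u => weight lam u x) (-(x⁻¹ * weight lam s x)) s := by
  have h1 : HasDerivAt (fun u : ℝ => -x ^ 2 - u / x) (-(x⁻¹)) s := by
    simpa using ((hasDerivAt_id s).div_const x).const_sub (-x^2)
  have h2 := (h1.exp).const_mul (x ^ lam)
  refine h2.congr_deriv ?_
  unfold weight; ring

lemma hasDerivAt_mom (hmom : MomOK lam) (k : ℤ) {t : ℝ} (ht : 0 < t) :
    HasDerivAt (mom lam k) (-(mom lam (k-1) t)) t := by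
  have h2 : (0:ℝ) < t/2 := by linarith
  have key := hasDerivAt_integral_of_dominated_loc_of_deriv_le (μ := volume.restrict (Set.Ioi (0:ℝ)))
    (F := fun u x => x ^ k * weight lam u x)
    (F' := fun u x => -(x ^ (k-1) * weight lam u x))
    (x₀ := t) (s := Metric.ball t (t/2)) (Metric.ball_mem_nhds t h2)
    (bound := fun x => x ^ (k-1) * weight lam (t/2) x)
    (Filter.Eventually.of_forall fun u => weight_aesm lam u k)
    (hmom k t ht) ((weight_aesm lam t (k-1)).neg)
    ?_ (hmom (k-1) (t/2) h2) ?_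
  · have := key.2
    rw [integral_neg] at this
    exact this
  · filter_upwards [ae_restrict_mem measurableSet_Ioi] with x hx
    intro u hu
    have hxx := hx
    simp only [Set.mem_Ioi] at hxx
    have hu' : t/2 ≤ u := by
      have := Metric.mem_ball.1 hu
      rw [Real.dist_eq, abs_lt] at this
      linarith
    have hwp := (weight_pos lam u hxx)
    have hz : (0:ℝ) ≤ x ^ (k-1) := zpow_nonneg hxx.le _
    rw [norm_neg, norm_mul, Real.norm_eq_abs, Real.norm_eq_abs,
      abs_of_nonneg hz, abs_of_nonneg hwp.le]
    exact mul_le_mul_of_nonneg_left (weight_le lam hu' hxx) hz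
  · filter_upwards [ae_restrict_mem measurableSet_Ioi] with x hx
    intro u _
    simp only [Set.mem_Ioi] at hx
    have := (hasDerivAt_weight_param hx lam u).const_mul (x ^ k)
    refine this.congr_deriv ?_
    rw [zpow_sub_one₀ (ne_of_gt hx)]
    ring

variable (S : SingLaguerreOPS lam)

/-- The polynomial integral `∫ q(x) x^k w(x;t) dx`. -/
noncomputable def Jk (lam : ℝ) (q : Polynomial ℝ) (k : ℤ) (t : ℝ) : ℝ :=
  ∫ x in Set.Ioi (0:ℝ), q.eval x * (x ^ k * weight lam t x)

lemma Jk_add (hmom : MomOK lam) (p q : Polynomial ℝ) (k : ℤ) {t : ℝ} (ht : 0 < t) :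
    Jk lam (p + q) k t = Jk lam p k t + Jk lam q k t := by
  unfold Jk
  rw [← integral_add (integrableOn_poly hmom p k ht) (integrableOn_poly hmom q k ht)]
  simp [add_mul]

lemma Jk_smul (c : ℝ) (q : Polynomial ℝ) (k : ℤ) (t : ℝ) :
    Jk lam (Polynomial.C c * q) k t = c * Jk lam q k t := by
  unfold Jk
  rw [← integral_const_mul]
  simp [mul_assoc]

lemma Jk_zero (k : ℤ) (t : ℝ) : Jk lam 0 k t = 0 := by simp [Jk]

lemma Jk_shift (q : Polynomial ℝ) (k : ℤ) (t : ℝ) :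
    Jk lam (Polynomial.X * q) k t = Jk lam q (k+1) t := by
  unfold Jk
  refine setIntegral_congr_fun measurableSet_Ioi fun x hx => ?_
  have hx0 : (x:ℝ) ≠ 0 := ne_of_gt hx
  rw [zpow_add_one₀ hx0]
  simp only [Polynomial.eval_mul, Polynomial.eval_X]
  ring

lemma J_orth (m m' : ℕ) {t : ℝ} (ht : 0 < t) :
    Jk lam (S.P m t * S.P m' t) 0 t = if m = m' then S.h m' t else 0 := by
  rw [← S.orth m m' t ht]
  unfold Jk
  congr 1
  funext x
  simp only [Polynomial.eval_mul, zpow_zero, one_mul]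

lemma coeff_P_self {m : ℕ} {t : ℝ} (ht : 0 < t) : (S.P m t).coeff m = 1 := by
  have h1 := (S.monic m t ht).coeff_natDegree
  rwa [S.natDegree_eq m t ht] at h1

lemma coeff_P_gt {m e : ℕ} (hme : m < e) {t : ℝ} (ht : 0 < t) : (S.P m t).coeff e = 0 := by
  apply Polynomial.coeff_eq_zero_of_natDegree_lt
  rwa [S.natDegree_eq m t ht]

lemma J_L {t : ℝ} (ht : 0 < t) :
    ∀ (d : ℕ) (q : Polynomial ℝ) (m : ℕ), q.natDegree ≤ d → d ≤ m →
      Jk lam (q * S.P m t) 0 t = q.coeff m * S.h m t := by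
  intro d
  induction d with
  | zero =>
    intro q m hq _
    rw [Polynomial.eq_C_of_natDegree_le_zero hq, Jk_smul]
    have hPm : Jk lam (S.P m t) 0 t = if 0 = m then S.h m t else 0 := by
      rw [← J_orth S 0 m ht, S.P_zero t ht, one_mul]
    rw [hPm]
    rcases Nat.eq_zero_or_pos m with h | h
    · subst h; simp
    · rw [if_neg (by omega), Polynomial.coeff_C, if_neg (by omega), mul_zero, zero_mul]
  | succ d IH =>
    intro q m hq hm
    set c := q.coeff (d+1) with hc
    set q' := q - Polynomial.C c * S.P (d+1) t with hq'def
    have hq'deg : q'.natDegree ≤ d := by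
      rw [Polynomial.natDegree_le_iff_coeff_eq_zero]
      intro e he
      rw [hq'def, Polynomial.coeff_sub, Polynomial.coeff_C_mul]
      rcases eq_or_lt_of_le (Nat.succ_le_of_lt he) with h | h
      · rw [← h, coeff_P_self S ht, mul_one, sub_self]
      · rw [Polynomial.coeff_eq_zero_of_natDegree_lt (lt_of_le_of_lt hq h),
          coeff_P_gt S h ht, mul_zero, sub_zero]
    have hsplit : q * S.P m t = q' * S.P m t + Polynomial.C c * (S.P (d+1) t * S.P m t) := by
      rw [hq'def]; ring
    rw [hsplit, Jk_add S.moments _ _ _ ht, Jk_smul, IH q' m hq'deg (le_trans (Nat.le_succ d) hm),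
      J_orth S _ _ ht]
    rcases eq_or_lt_of_le hm with h | h
    · subst h
      rw [if_pos rfl,
        Polynomial.coeff_eq_zero_of_natDegree_lt (lt_of_le_of_lt hq'deg (Nat.lt_succ_self d)),
        zero_mul, zero_add]
    · rw [if_neg (by omega)]
      have h1 : q'.coeff m = q.coeff m := by
        rw [hq'def, Polynomial.coeff_sub, Polynomial.coeff_C_mul, coeff_P_gt S h ht,
          mul_zero, sub_zero]
      rw [h1, mul_zero, add_zero]

lemma Jk_expand3 (hmom : MomOK lam) (p1 p2 p3 q : Polynomial ℝ) (k : ℤ) {t : ℝ} (ht : 0 < t) :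
    Jk lam ((p1 + p2 + p3) * q) k t
      = Jk lam (p1*q) k t + Jk lam (p2*q) k t + Jk lam (p3*q) k t := by
  have h1 : (p1+p2+p3)*q = p1*q + (p2*q + p3*q) := by ring
  rw [h1, Jk_add hmom _ _ _ ht, Jk_add hmom _ _ _ ht]
  ring

lemma Jk_smul' (c : ℝ) (p q : Polynomial ℝ) (k : ℤ) (t : ℝ) :
    Jk lam (Polynomial.C c * p * q) k t = c * Jk lam (p * q) k t := by
  rw [mul_assoc, Jk_smul]

lemma J_XP (m m' : ℕ) {t : ℝ} (ht : 0 < t) :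
    Jk lam ((Polynomial.X * S.P m t) * S.P m' t) 0 t
      = (if m+1 = m' then S.h m' t else 0) + S.α m t * (if m = m' then S.h m' t else 0)
        + S.β m t * (if m' + 1 = m then S.h m' t else 0) := by
  rw [S.recur m t ht, Jk_expand3 S.moments _ _ _ _ _ ht, Jk_smul', Jk_smul',
    J_orth S _ _ ht, J_orth S _ _ ht]
  congr 2
  rcases m with _ | mm
  · simp [Jk_zero]
  · simp only [Nat.succ_ne_zero, ite_false, Nat.add_sub_cancel]
    rw [J_orth S _ _ ht]
    by_cases h : mm = m'
    · subst h; rw [if_pos rfl, if_pos rfl]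
    · rw [if_neg h, if_neg (by omega)]

lemma beta_h (m : ℕ) {t : ℝ} (ht : 0 < t) : S.h (m+1) t = S.β (m+1) t * S.h m t := by
  have e1 : Jk lam ((Polynomial.X * S.P m t) * S.P (m+1) t) 0 t = S.h (m+1) t := by
    rw [J_XP S m (m+1) ht, if_pos rfl, if_neg (by omega), if_neg (by omega)]
    ring
  have e2 : Jk lam ((Polynomial.X * S.P (m+1) t) * S.P m t) 0 t
      = S.β (m+1) t * S.h m t := by
    rw [J_XP S (m+1) m ht, if_pos rfl, if_neg (by omega), if_neg (by omega)]
    ring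
  rw [← e1, ← e2]
  congr 1
  ring

lemma alpha_h (m : ℕ) {t : ℝ} (ht : 0 < t) :
    Jk lam ((Polynomial.X * S.P m t) * S.P m t) 0 t = S.α m t * S.h m t := by
  rw [J_XP S m m ht]
  simp [if_neg (show ¬ (m+1 = m) by omega)]

lemma V_id (m : ℕ) {t : ℝ} (ht : 0 < t) :
    S.h m t = Jk lam (S.P (m+1) t * S.P m t) (-1) t
      + S.α m t * Jk lam (S.P m t * S.P m t) (-1) t
      + S.β m t * Jk lam ((if m = 0 then 0 else S.P (m-1) t) * S.P m t) (-1) t := by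
  have e0 : Jk lam ((Polynomial.X * S.P m t) * S.P m t) (-1) t = S.h m t := by
    rw [mul_assoc, Jk_shift, (show (-1:ℤ)+1 = 0 by norm_num), J_orth S m m ht, if_pos rfl]
  rw [← e0]
  conv_lhs => rw [S.recur m t ht]
  rw [Jk_expand3 S.moments _ _ _ _ _ ht, Jk_smul', Jk_smul']

/-- x-derivative of the weight on `(0,∞)`. -/
lemma hasDerivAt_weight_x {lam t y : ℝ} (hy : 0 < y) :
    HasDerivAt (weight lam t)
      ((lam * y⁻¹ - 2*y + t * (y^2)⁻¹) * weight lam t y) y := by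
  have h1 : HasDerivAt (fun y : ℝ => y ^ lam) (lam * y ^ (lam - 1)) y :=
    Real.hasDerivAt_rpow_const (Or.inl hy.ne')
  have h2 : HasDerivAt (fun y : ℝ => -y^2 - t/y) (-(2*y) - t * (-(y^2)⁻¹)) y := by
    have ha : HasDerivAt (fun y : ℝ => -y^2) (-(2*y)) y := by
      simpa using (hasDerivAt_pow 2 y).fun_neg
    have hb : HasDerivAt (fun y : ℝ => t / y) (t * (-(y^2)⁻¹)) y := by
      simpa [div_eq_mul_inv] using (hasDerivAt_inv hy.ne').const_mul t
    simpa using ha.fun_sub hb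
  have h3 := h1.mul h2.exp
  refine h3.congr_deriv ?_
  unfold weight
  rw [Real.rpow_sub_one hy.ne']
  field_simp
  ring

lemma weight_le_one {lam t y : ℝ} (hlam : 0 ≤ lam) (ht : 0 ≤ t) (hy0 : 0 ≤ y) (hy1 : y ≤ 1) :
    weight lam t y ≤ 1 := by
  unfold weight
  have h1 : y ^ lam ≤ 1 := Real.rpow_le_one hy0 hy1 hlam
  have h2 : Real.exp (-y^2 - t/y) ≤ 1 := by
    rw [Real.exp_le_one_iff]
    have : 0 ≤ t / y := by
      rcases eq_or_lt_of_le hy0 with h | h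
      · rw [← h]; simp
      · positivity
    nlinarith
  calc y ^ lam * Real.exp (-y^2 - t/y) ≤ 1 * 1 := by
        apply mul_le_mul h1 h2 (Real.exp_pos _).le zero_le_one
    _ = 1 := by norm_num

lemma weight_nonneg (lam t : ℝ) {y : ℝ} (hy : 0 ≤ y) : 0 ≤ weight lam t y :=
  mul_nonneg (Real.rpow_nonneg hy lam) (Real.exp_pos _).le

/-- Boundary-vanishing integration by parts: for any polynomial `p`,
`∫₀^∞ (x p(x) w(x))' dx = 0`. -/
lemma integral_deriv_eq_zero (hlam : 0 ≤ lam) (hmom : MomOK lam) (p : Polynomial ℝ)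
    {t : ℝ} (ht : 0 < t) :
    ∫ y in Set.Ioi (0:ℝ),
      ((Polynomial.derivative (Polynomial.X * p)).eval y * weight lam t y
        + (Polynomial.X * p).eval y * ((lam * y⁻¹ - 2*y + t * (y^2)⁻¹) * weight lam t y)) = 0 := by
  set g : Polynomial ℝ := Polynomial.X * p with hg
  set F : ℝ → ℝ := fun y => g.eval y * weight lam t y with hF
  set F' : ℝ → ℝ := fun y =>
    (Polynomial.derivative g).eval y * weight lam t y
      + g.eval y * ((lam * y⁻¹ - 2*y + t * (y^2)⁻¹) * weight lam t y) with hF'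
  have hF0 : F 0 = 0 := by simp [hF, hg]
  have hderiv : ∀ y ∈ Set.Ioi (0:ℝ), HasDerivAt F (F' y) y := by
    intro y hy
    exact (Polynomial.hasDerivAt g y).mul (hasDerivAt_weight_x hy)
  have hcont : ContinuousWithinAt F (Set.Ici (0:ℝ)) 0 := by
    have htend : Filter.Tendsto F (nhdsWithin 0 (Set.Ici (0:ℝ))) (nhds 0) := by
      apply squeeze_zero_norm' (a := fun y => |g.eval y|)
      · filter_upwards [Filter.inter_mem self_mem_nhdsWithin
          (nhdsWithin_le_nhds (Metric.ball_mem_nhds (0:ℝ) one_pos))] with y hy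
        obtain ⟨hy0, hy1⟩ := hy
        have hy1' : y ≤ 1 := by
          have := Metric.mem_ball.1 hy1
          rw [Real.dist_eq, abs_lt] at this
          linarith [this.1, this.2]
        have hy0' : (0:ℝ) ≤ y := hy0
        rw [hF, Real.norm_eq_abs, abs_mul, abs_of_nonneg (weight_nonneg lam t hy0')]
        nlinarith [weight_le_one (t := t) hlam ht.le hy0' hy1', abs_nonneg (g.eval y),
          weight_nonneg lam t hy0']
      · have hcg : Filter.Tendsto (fun y => |g.eval y|) (nhdsWithin 0 (Set.Ici (0:ℝ))) (nhds (|g.eval 0|)) :=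
          ((g.continuous_aeval.abs.tendsto 0).comp ?_)
        · simpa [hg] using hcg
        · exact nhdsWithin_le_nhds
    rw [ContinuousWithinAt, hF0]
    exact htend
  have htop : Filter.Tendsto F Filter.atTop (nhds 0) := by
    set c : ℕ := ⌈lam⌉₊ with hc
    set r : Polynomial ℝ := g * Polynomial.X ^ c with hr
    apply squeeze_zero_norm' (a := fun y => |r.eval y / Real.exp y|)
    · filter_upwards [Filter.eventually_ge_atTop (1:ℝ)] with y hy1
      have hy0 : (0:ℝ) < y := lt_of_lt_of_le one_pos hy1
      have h1 : y ^ lam ≤ y ^ (c:ℝ) :=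
        Real.rpow_le_rpow_of_exponent_le hy1 (Nat.le_ceil lam)
      have h2 : Real.exp (-y^2 - t/y) ≤ Real.exp (-y) := by
        apply Real.exp_le_exp.2
        have : 0 ≤ t / y := by positivity
        nlinarith
      have h3 : ‖F y‖ ≤ |g.eval y| * (y ^ (c:ℝ) * Real.exp (-y)) := by
        rw [hF, Real.norm_eq_abs, abs_mul, abs_of_nonneg (weight_nonneg lam t hy0.le)]
        apply mul_le_mul_of_nonneg_left _ (abs_nonneg _)
        unfold weight
        have := Real.rpow_nonneg hy0.le lam
        apply mul_le_mul h1 h2 (Real.exp_pos _).le (Real.rpow_nonneg hy0.le _)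
      calc ‖F y‖ ≤ |g.eval y| * (y ^ (c:ℝ) * Real.exp (-y)) := h3
        _ = |r.eval y / Real.exp y| := by
            rw [Real.rpow_natCast, Real.exp_neg]
            simp only [hr, Polynomial.eval_mul, Polynomial.eval_pow, Polynomial.eval_X,
              abs_mul, abs_of_nonneg (pow_nonneg hy0.le c),
              abs_of_nonneg (Real.exp_pos y).le, Real.exp_neg, div_eq_mul_inv,
              abs_of_nonneg (inv_nonneg.2 (Real.exp_pos y).le)]
            ring
    · have := (r.tendsto_div_exp_atTop).abs
      simpa using this
  have key := MeasureTheory.integral_Ioi_of_hasDerivAt_of_tendsto hcont hderiv ?_ htop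
  · rw [key, hF0, sub_zero]
  · -- integrability of F' on (0,∞)
    apply MeasureTheory.IntegrableOn.congr_fun
      (f := fun y => (Polynomial.derivative g).eval y * ((y:ℝ) ^ (0:ℤ) * weight lam t y)
        + lam * (p.eval y * ((y:ℝ) ^ (0:ℤ) * weight lam t y))
        + ((-2) * ((Polynomial.X*g).eval y * ((y:ℝ) ^ (0:ℤ) * weight lam t y))
        + t * (p.eval y * ((y:ℝ) ^ (-1:ℤ) * weight lam t y))))
    · exact ((integrableOn_poly hmom (Polynomial.derivative g) 0 ht).add
        ((integrableOn_poly hmom p 0 ht).const_mul lam)).add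
        (((integrableOn_poly hmom (Polynomial.X*g) 0 ht).const_mul (-2)).add
        ((integrableOn_poly hmom p (-1) ht).const_mul t))
    · intro y hy
      have hy0 : (0:ℝ) < y := hy
      have hyne : (y:ℝ) ≠ 0 := hy0.ne'
      simp only [hF', hg, Polynomial.eval_mul, Polynomial.eval_X, zpow_zero, one_mul,
        zpow_neg_one, Polynomial.derivative_mul, Polynomial.derivative_X,
        Polynomial.eval_add, Polynomial.eval_one]
      field_simp
      ring
    · exact measurableSet_Ioi

lemma pearson (hlam : 0 ≤ lam) (hmom : MomOK lam) (p : Polynomial ℝ) {t : ℝ} (ht : 0 < t) :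
    Jk lam (Polynomial.derivative (Polynomial.X * p)) 0 t + lam * Jk lam p 0 t
      + ((-2) * Jk lam (Polynomial.X * (Polynomial.X * p)) 0 t + t * Jk lam p (-1) t) = 0 := by
  have h0 := integral_deriv_eq_zero hlam hmom p ht
  rw [← h0]
  have h1 : ∀ y ∈ Set.Ioi (0:ℝ),
      ((Polynomial.derivative (Polynomial.X * p)).eval y * weight lam t y
        + (Polynomial.X * p).eval y * ((lam * y⁻¹ - 2*y + t * (y^2)⁻¹) * weight lam t y))
      = (Polynomial.derivative (Polynomial.X*p)).eval y * ((y:ℝ) ^ (0:ℤ) * weight lam t y)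
        + lam * (p.eval y * ((y:ℝ) ^ (0:ℤ) * weight lam t y))
        + ((-2) * ((Polynomial.X*(Polynomial.X*p)).eval y * ((y:ℝ) ^ (0:ℤ) * weight lam t y))
        + t * (p.eval y * ((y:ℝ) ^ (-1:ℤ) * weight lam t y))) := by
    intro y hy
    have hyne : (y:ℝ) ≠ 0 := (ne_of_gt hy)
    simp only [Polynomial.eval_mul, Polynomial.eval_X, zpow_zero, one_mul, zpow_neg_one]
    field_simp
    ring
  rw [setIntegral_congr_fun measurableSet_Ioi h1]
  have hA := integrableOn_poly hmom (Polynomial.derivative (Polynomial.X*p)) 0 ht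
  have hB := (integrableOn_poly hmom p 0 ht).const_mul lam
  have hC := (integrableOn_poly hmom (Polynomial.X*(Polynomial.X*p)) 0 ht).const_mul (-2:ℝ)
  have hD := (integrableOn_poly hmom p (-1) ht).const_mul t
  simp only [Jk]
  rw [← integral_const_mul lam, ← integral_const_mul (-2:ℝ), ← integral_const_mul t]
  have hAB : IntegrableOn (fun x => (Polynomial.derivative (Polynomial.X*p)).eval x
      * ((x:ℝ) ^ (0:ℤ) * weight lam t x)
      + lam * (p.eval x * ((x:ℝ) ^ (0:ℤ) * weight lam t x))) (Set.Ioi (0:ℝ)) := hA.add hB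
  have hCD : IntegrableOn (fun x => (-2:ℝ) * ((Polynomial.X*(Polynomial.X*p)).eval x
      * ((x:ℝ) ^ (0:ℤ) * weight lam t x))
      + t * (p.eval x * ((x:ℝ) ^ (-1:ℤ) * weight lam t x))) (Set.Ioi (0:ℝ)) := hC.add hD
  rw [← integral_add hA hB, ← integral_add hC hD, ← integral_add hAB hCD]

lemma coeff_s_aux {m : ℕ} {t : ℝ} (ht : 0 < t) :
    (Polynomial.X * Polynomial.derivative (S.P (m+1) t)
      - Polynomial.C ((m:ℝ)+1) * S.P (m+1) t).natDegree ≤ m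
    ∧ (Polynomial.X * Polynomial.derivative (S.P (m+1) t)
      - Polynomial.C ((m:ℝ)+1) * S.P (m+1) t).coeff m = -((S.P (m+1) t).coeff m) := by
  set P := S.P (m+1) t with hP
  have hco : ∀ e : ℕ, (Polynomial.X * Polynomial.derivative P
      - Polynomial.C ((m:ℝ)+1) * P).coeff e
      = (e:ℝ) * P.coeff e - ((m:ℝ)+1) * P.coeff e := by
    intro e
    rw [Polynomial.coeff_sub, Polynomial.coeff_C_mul]
    rcases e with _ | e'
    · simp
    · rw [Polynomial.coeff_X_mul, Polynomial.coeff_derivative]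
      push_cast
      ring
  constructor
  · rw [Polynomial.natDegree_le_iff_coeff_eq_zero]
    intro e he
    rw [hco e]
    rcases eq_or_lt_of_le (Nat.succ_le_of_lt he) with h | h
    · rw [← h, coeff_P_self S ht]
      push_cast
      ring
    · rw [coeff_P_gt S h ht]
      ring
  · rw [hco m]
    ring

lemma IV (hlam : 0 ≤ lam) (m : ℕ) {t : ℝ} (ht : 0 < t) :
    t * Jk lam (S.P (m+1) t * S.P m t) (-1) t
      = (S.P (m+1) t).coeff m * S.h m t
        + 2 * (S.α (m+1) t * S.h (m+1) t + S.α m t * S.β (m+1) t * S.h m t) := by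
  have hpear := pearson (lam := lam) hlam S.moments (S.P (m+1) t * S.P m t) ht
  set p := S.P (m+1) t * S.P m t with hp
  -- the derivative term
  have hD : Polynomial.derivative (Polynomial.X * p)
      = p + ((Polynomial.X * Polynomial.derivative (S.P (m+1) t)) * S.P m t
        + (Polynomial.X * Polynomial.derivative (S.P m t)) * S.P (m+1) t) := by
    rw [hp, Polynomial.derivative_mul, Polynomial.derivative_X, Polynomial.derivative_mul]
    ring
  have hJp : Jk lam p 0 t = 0 := by
    rw [hp, J_orth S _ _ ht, if_neg (by omega)]
  have hJ1 : Jk lam ((Polynomial.X * Polynomial.derivative (S.P m t)) * S.P (m+1) t) 0 t = 0 := by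
    have hdeg : (Polynomial.X * Polynomial.derivative (S.P m t)).natDegree ≤ m+1 := by
      apply le_trans (Polynomial.natDegree_mul_le)
      have := Polynomial.natDegree_derivative_le (S.P m t)
      rw [S.natDegree_eq m t ht] at this
      rw [Polynomial.natDegree_X]
      omega
    rw [J_L S ht (m+1) _ (m+1) hdeg le_rfl, Polynomial.coeff_X_mul,
      Polynomial.coeff_derivative, coeff_P_gt S (by omega) ht]
    ring
  have hJ2 : Jk lam ((Polynomial.X * Polynomial.derivative (S.P (m+1) t)) * S.P m t) 0 t
      = -((S.P (m+1) t).coeff m) * S.h m t := by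
    obtain ⟨hsdeg, hscoeff⟩ := coeff_s_aux S (m := m) ht
    have hsplit : (Polynomial.X * Polynomial.derivative (S.P (m+1) t)) * S.P m t
        = (Polynomial.X * Polynomial.derivative (S.P (m+1) t)
            - Polynomial.C ((m:ℝ)+1) * S.P (m+1) t) * S.P m t
          + Polynomial.C ((m:ℝ)+1) * (S.P (m+1) t * S.P m t) := by
      ring
    rw [hsplit, Jk_add S.moments _ _ _ ht, Jk_smul,
      J_L S ht m _ m hsdeg le_rfl, hscoeff, J_orth S _ _ ht, if_neg (by omega)]
    ring
  have hDer : Jk lam (Polynomial.derivative (Polynomial.X * p)) 0 t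
      = -((S.P (m+1) t).coeff m) * S.h m t := by
    rw [hD, Jk_add S.moments _ _ _ ht, Jk_add S.moments _ _ _ ht, hJp, hJ1, hJ2]
    ring
  -- the -2 X² term
  have hXX : Jk lam (Polynomial.X * (Polynomial.X * p)) 0 t
      = S.α (m+1) t * S.h (m+1) t + S.α m t * S.β (m+1) t * S.h m t := by
    have e : Polynomial.X * (Polynomial.X * p)
        = (Polynomial.X * S.P m t) * (Polynomial.X * S.P (m+1) t) := by
      rw [hp]; ring
    rw [e, S.recur m t ht, Jk_expand3 S.moments _ _ _ _ _ ht, Jk_smul', Jk_smul']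
    have t1 : Jk lam (S.P (m+1) t * (Polynomial.X * S.P (m+1) t)) 0 t
        = S.α (m+1) t * S.h (m+1) t := by
      rw [mul_comm, alpha_h S _ ht]
    have t2 : Jk lam (S.P m t * (Polynomial.X * S.P (m+1) t)) 0 t
        = S.β (m+1) t * S.h m t := by
      rw [mul_comm, J_XP S (m+1) m ht, if_neg (by omega), if_neg (by omega), if_pos rfl]
      ring
    have t3 : Jk lam ((if m = 0 then 0 else S.P (m-1) t) * (Polynomial.X * S.P (m+1) t)) 0 t
        = 0 := by
      rcases m with _ | mm
      · simp [Jk_zero]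
      · rw [if_neg (by omega)]
        simp only [Nat.add_sub_cancel]
        rw [mul_comm, J_XP S (mm+2) mm ht, if_neg (by omega), if_neg (by omega),
          if_neg (by omega)]
        ring
    rw [t1, t2, t3]
    ring
  rw [hDer, hJp, hXX] at hpear
  linarith

lemma Jk_neg (hmom : MomOK lam) (q : Polynomial ℝ) (k : ℤ) {t : ℝ} (ht : 0 < t) :
    Jk lam (-q) k t = - Jk lam q k t := by
  have := Jk_add hmom q (-q) k ht
  simp only [add_neg_cancel, Jk_zero] at this
  linarith

lemma Jk_sub (hmom : MomOK lam) (p q : Polynomial ℝ) (k : ℤ) {t : ℝ} (ht : 0 < t) :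
    Jk lam (p - q) k t = Jk lam p k t - Jk lam q k t := by
  rw [sub_eq_add_neg, Jk_add hmom _ _ _ ht, Jk_neg hmom _ _ ht]
  ring

lemma Jk_sum (hmom : MomOK lam) (sfin : Finset ℕ) (f : ℕ → Polynomial ℝ) (k : ℤ)
    {t : ℝ} (ht : 0 < t) :
    Jk lam (∑ j ∈ sfin, f j) k t = ∑ j ∈ sfin, Jk lam (f j) k t := by
  classical
  induction sfin using Finset.induction with
  | empty => simp [Jk_zero]
  | insert _ _ hnotmem ih =>
    rw [Finset.sum_insert hnotmem, Finset.sum_insert hnotmem, Jk_add hmom _ _ _ ht, ih]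

lemma Jk_Xpow (i : ℕ) (q : Polynomial ℝ) (k : ℤ) (t : ℝ) :
    Jk lam (Polynomial.X ^ i * q) k t = Jk lam q (k + i) t := by
  induction i generalizing k with
  | zero => simp
  | succ i' ih =>
    have e : Polynomial.X ^ (i'+1) * q = Polynomial.X * (Polynomial.X ^ i' * q) := by ring
    rw [e, Jk_shift, ih]
    congr 1
    push_cast
    ring

lemma J2_eq (hmom : MomOK lam) (p q : Polynomial ℝ) {a : ℕ} (hp : p.natDegree < a)
    (k : ℤ) {t : ℝ} (ht : 0 < t) :
    Jk lam (p * q) k t = ∑ j ∈ Finset.range a, p.coeff j * Jk lam q (k + j) t := by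
  conv_lhs => rw [p.as_sum_range' a hp, Finset.sum_mul]
  rw [Jk_sum hmom _ _ _ ht]
  refine Finset.sum_congr rfl fun j _ => ?_
  rw [← Polynomial.C_mul_X_pow_eq_monomial, mul_assoc, Jk_smul, Jk_Xpow]

lemma Jk_P_eq_mom_sum (b : ℕ) (k : ℤ) {t : ℝ} (ht : 0 < t) :
    Jk lam (S.P b t) k t = ∑ l ∈ Finset.range (b+1), (S.P b t).coeff l * mom lam ((l:ℤ)+k) t := by
  rw [Jk, integral_poly S.moments _ k ht, S.natDegree_eq b t ht]

/-- coefficient recursion from the three-term recurrence. -/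
lemma coeff_rec (m : ℕ) {t : ℝ} (ht : 0 < t) :
    (S.P (m+1) t).coeff m = (S.P (m+2) t).coeff (m+1) + S.α (m+1) t := by
  have h := congrArg (fun q : Polynomial ℝ => q.coeff (m+1)) (S.recur (m+1) t ht)
  simp only [Polynomial.coeff_add, Polynomial.coeff_C_mul, Polynomial.coeff_X_mul] at h
  rw [coeff_P_self S ht, if_neg (Nat.succ_ne_zero m), Nat.add_sub_cancel,
    coeff_P_gt S (m := m) (e := m+1) (by omega) ht] at h
  rw [show m+1+1 = m+2 from rfl] at h
  simpa using h

lemma h_eq_J (i : ℕ) {u : ℝ} (hu : 0 < u) :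
    S.h i u = Jk lam (S.P i u * S.P i u) 0 u := by
  rw [J_orth S i i hu, if_pos rfl]

lemma diff_mom (hmom : MomOK lam) (k : ℤ) {s : ℝ} (hs : 0 < s) :
    DifferentiableAt ℝ (fun u => mom lam k u) s :=
  (hasDerivAt_mom hmom k hs).differentiableAt

lemma diff_coeff : ∀ (m : ℕ) (j : ℕ) {s : ℝ}, 0 < s →
    DifferentiableAt ℝ (fun u => (S.P m u).coeff j) s := by
  intro m
  induction m using Nat.strong_induction_on with
  | _ m IH =>
  intro j s hs
  have hmem : Set.Ioi (0:ℝ) ∈ nhds s := Ioi_mem_nhds hs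
  -- the formula functions
  set gFun : ℕ → ℝ → ℝ := fun i u => ∑ l ∈ Finset.range (i+1),
    (S.P i u).coeff l * mom lam ((l:ℤ)+((0:ℤ)+(m:ℤ))) u with hgFun
  set hFun : ℕ → ℝ → ℝ := fun i u => ∑ jj ∈ Finset.range (i+1), (S.P i u).coeff jj *
    (∑ l ∈ Finset.range (i+1), (S.P i u).coeff l * mom lam ((l:ℤ)+((0:ℤ)+(jj:ℤ))) u) with hhFun
  -- their values
  have hg_val : ∀ i, ∀ u, 0 < u →
      gFun i u = Jk lam (Polynomial.X ^ m * S.P i u) 0 u := by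
    intro i u hu
    rw [Jk_Xpow, Jk_P_eq_mom_sum S i _ hu, hgFun]
  have hh_val : ∀ i, ∀ u, 0 < u → hFun i u = S.h i u := by
    intro i u hu
    rw [h_eq_J S i hu, J2_eq S.moments _ _ (a := i+1) (by rw [S.natDegree_eq i u hu]; omega) 0 hu, hhFun]
    refine Finset.sum_congr rfl fun jj _ => ?_
    rw [Jk_P_eq_mom_sum S i _ hu]
  -- the polynomial Q u
  set Q : ℝ → Polynomial ℝ := fun u => Polynomial.X ^ m
    - ∑ i ∈ Finset.range m, Polynomial.C (gFun i u / hFun i u) * S.P i u with hQ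
  -- P m u = Q u for u > 0
  have hPQ : ∀ u, 0 < u → S.P m u = Q u := by
    intro u hu
    have hortho : ∀ kk, kk < m → Jk lam ((S.P m u - Q u) * S.P kk u) 0 u = 0 := by
      intro kk hkk
      rw [sub_mul, Jk_sub S.moments _ _ _ hu, J_orth S _ _ hu, if_neg (by omega)]
      have hQk : Q u * S.P kk u = Polynomial.X ^ m * S.P kk u
          - ∑ i ∈ Finset.range m,
            Polynomial.C (gFun i u / hFun i u) * (S.P i u * S.P kk u) := by
        rw [hQ]
        rw [sub_mul, Finset.sum_mul]
        congr 1
        exact Finset.sum_congr rfl fun i _ => by ring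
      rw [hQk, Jk_sub S.moments _ _ _ hu, Jk_sum S.moments _ _ _ hu]
      have hsum : ∑ i ∈ Finset.range m,
          Jk lam (Polynomial.C (gFun i u / hFun i u) * (S.P i u * S.P kk u)) 0 u
          = gFun kk u := by
        have : ∀ i ∈ Finset.range m,
            Jk lam (Polynomial.C (gFun i u / hFun i u) * (S.P i u * S.P kk u)) 0 u
            = if i = kk then gFun kk u else 0 := by
          intro i _
          rw [Jk_smul, J_orth S _ _ hu]
          by_cases h : i = kk
          · subst h
            rw [if_pos rfl, if_pos rfl, hh_val i u hu,
              div_mul_cancel₀ _ (ne_of_gt (S.h_pos i u hu))]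
          · rw [if_neg h, if_neg h, mul_zero]
        rw [Finset.sum_congr rfl this, Finset.sum_ite_eq' (Finset.range m) kk
          (fun _ => gFun kk u), if_pos (Finset.mem_range.2 hkk)]
      rw [hsum, hg_val kk u hu]
      ring
    have hcoeff_high : ∀ e, m < e → (S.P m u - Q u).coeff e = 0 := by
      intro e he
      rw [Polynomial.coeff_sub, coeff_P_gt S he hu, hQ, Polynomial.coeff_sub,
        Polynomial.coeff_X_pow, if_neg (by omega), Polynomial.finset_sum_coeff]
      rw [Finset.sum_congr rfl (fun i hi => by
        rw [Polynomial.coeff_C_mul, coeff_P_gt S (lt_trans (Finset.mem_range.1 hi) he) hu,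
          mul_zero])]
      simp
    have hcoeff_m : (S.P m u - Q u).coeff m = 0 := by
      rw [Polynomial.coeff_sub, coeff_P_self S hu, hQ, Polynomial.coeff_sub,
        Polynomial.coeff_X_pow, if_pos rfl, Polynomial.finset_sum_coeff]
      rw [Finset.sum_congr rfl (fun i hi => by
        rw [Polynomial.coeff_C_mul, coeff_P_gt S (Finset.mem_range.1 hi) hu, mul_zero])]
      simp
    by_contra hne
    have hr : S.P m u - Q u ≠ 0 := fun h => hne (sub_eq_zero.1 h)
    set r := S.P m u - Q u with hrdef
    have hrd : r.natDegree ≤ m := by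
      rw [Polynomial.natDegree_le_iff_coeff_eq_zero]
      exact hcoeff_high
    have hrdm : r.natDegree < m := by
      rcases lt_or_eq_of_le hrd with h | h
      · exact h
      · exfalso
        have := Polynomial.coeff_natDegree (p := r)
        rw [h, hcoeff_m] at this
        exact hr (Polynomial.leadingCoeff_eq_zero.1 this.symm)
    have h1 := J_L S hu r.natDegree r r.natDegree le_rfl le_rfl
    rw [hortho r.natDegree hrdm] at h1
    have h2 : r.coeff r.natDegree ≠ 0 := by
      rw [Polynomial.coeff_natDegree]
      exact Polynomial.leadingCoeff_ne_zero.2 hr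
    exact h2 (by
      have h3 := S.h_pos r.natDegree u hu
      rcases mul_eq_zero.1 h1.symm with h | h
      · exact h
      · exact absurd h (ne_of_gt h3))
  -- coefficient formula
  have hcoeff_formula : ∀ u, 0 < u → (S.P m u).coeff j
      = (Polynomial.X ^ m : Polynomial ℝ).coeff j
        - ∑ i ∈ Finset.range m, (gFun i u / hFun i u) * (S.P i u).coeff j := by
    intro u hu
    rw [hPQ u hu, hQ, Polynomial.coeff_sub, Polynomial.finset_sum_coeff]
    congr 1
    exact Finset.sum_congr rfl fun i _ => Polynomial.coeff_C_mul _
  -- differentiability of the formula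
  have hgd : ∀ i, i < m → DifferentiableAt ℝ (gFun i) s := by
    intro i hi
    apply DifferentiableAt.fun_sum
    intro l _
    exact (IH i hi l hs).mul (diff_mom S.moments _ hs)
  have hhd : ∀ i, i < m → DifferentiableAt ℝ (hFun i) s := by
    intro i hi
    apply DifferentiableAt.fun_sum
    intro jj _
    exact (IH i hi jj hs).mul (DifferentiableAt.fun_sum fun l _ =>
      (IH i hi l hs).mul (diff_mom S.moments _ hs))
  have hF : DifferentiableAt ℝ (fun u => (Polynomial.X ^ m : Polynomial ℝ).coeff j
      - ∑ i ∈ Finset.range m, (gFun i u / hFun i u) * (S.P i u).coeff j) s := by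
    apply DifferentiableAt.sub (differentiableAt_const _)
    apply DifferentiableAt.fun_sum
    intro i hi
    have him := Finset.mem_range.1 hi
    have hhne : hFun i s ≠ 0 := by
      rw [hh_val i s hs]
      exact ne_of_gt (S.h_pos i s hs)
    exact ((hgd i him).div (hhd i him) hhne).mul (IH i him j hs)
  exact (Filter.EventuallyEq.differentiableAt_iff
    (Filter.eventuallyEq_of_mem hmem (fun u hu => hcoeff_formula u hu))).2 hF

lemma coeffpoly_coeff (f : ℕ → ℝ) (N jj : ℕ) :
    (∑ j ∈ Finset.range N, Polynomial.C (f j) * Polynomial.X ^ j).coeff jj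
      = if jj < N then f jj else 0 := by
  rw [Polynomial.finset_sum_coeff]
  rw [Finset.sum_congr rfl (fun j _ => by
    rw [Polynomial.coeff_C_mul, Polynomial.coeff_X_pow, mul_ite, mul_one, mul_zero])]
  rw [Finset.sum_ite_eq]
  simp [Finset.mem_range]

lemma coeffpoly_natDegree (f : ℕ → ℝ) (N : ℕ) (hN : 0 < N) :
    (∑ j ∈ Finset.range N, Polynomial.C (f j) * Polynomial.X ^ j).natDegree < N := by
  have h : (∑ j ∈ Finset.range N, Polynomial.C (f j) * Polynomial.X ^ j).natDegree ≤ N - 1 :=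
    Polynomial.natDegree_le_iff_coeff_eq_zero.2 (fun e he => by
      rw [coeffpoly_coeff, if_neg (by omega)])
  omega

lemma hasDerivAt_J2 (a b : ℕ) (pa pb : Polynomial ℝ) (k : ℤ) {t : ℝ} (ht : 0 < t)
    (da db : ℕ → ℝ)
    (hda : ∀ j, HasDerivAt (fun u => (S.P a u).coeff j) (da j) t)
    (hdb : ∀ l, HasDerivAt (fun u => (S.P b u).coeff l) (db l) t)
    (hpa : pa = ∑ j ∈ Finset.range (a+1), Polynomial.C (da j) * Polynomial.X ^ j)
    (hpb : pb = ∑ l ∈ Finset.range (b+1), Polynomial.C (db l) * Polynomial.X ^ l) :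
    HasDerivAt (fun u => Jk lam (S.P a u * S.P b u) k u)
      (Jk lam (pa * S.P b t) k t + Jk lam (pb * S.P a t) k t
        - Jk lam (S.P a t * S.P b t) (k-1) t) t := by
  have hform : ∀ u ∈ Set.Ioi (0:ℝ), Jk lam (S.P a u * S.P b u) k u
      = ∑ j ∈ Finset.range (a+1), ∑ l ∈ Finset.range (b+1),
        (S.P a u).coeff j * ((S.P b u).coeff l * mom lam ((l:ℤ)+(k+(j:ℤ))) u) := by
    intro u hu
    have hu' : (0:ℝ) < u := hu
    rw [J2_eq S.moments _ _ (a := a+1) (by rw [S.natDegree_eq a u hu']; omega) k hu']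
    refine Finset.sum_congr rfl fun j _ => ?_
    rw [Jk_P_eq_mom_sum S b _ hu', Finset.mul_sum]
  have hD : HasDerivAt (fun u => ∑ j ∈ Finset.range (a+1), ∑ l ∈ Finset.range (b+1),
      (S.P a u).coeff j * ((S.P b u).coeff l * mom lam ((l:ℤ)+(k+(j:ℤ))) u))
      (∑ j ∈ Finset.range (a+1), ∑ l ∈ Finset.range (b+1),
        (da j * ((S.P b t).coeff l * mom lam ((l:ℤ)+(k+(j:ℤ))) t)
          + (S.P a t).coeff j * (db l * mom lam ((l:ℤ)+(k+(j:ℤ))) t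
            + (S.P b t).coeff l * (-(mom lam ((l:ℤ)+(k+(j:ℤ))-1) t))))) t := by
    apply HasDerivAt.fun_sum
    intro j _
    apply HasDerivAt.fun_sum
    intro l _
    exact (hda j).mul ((hdb l).mul (hasDerivAt_mom S.moments _ ht))
  have hkey : HasDerivAt (fun u => Jk lam (S.P a u * S.P b u) k u)
      (∑ j ∈ Finset.range (a+1), ∑ l ∈ Finset.range (b+1),
        (da j * ((S.P b t).coeff l * mom lam ((l:ℤ)+(k+(j:ℤ))) t)
          + (S.P a t).coeff j * (db l * mom lam ((l:ℤ)+(k+(j:ℤ))) t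
            + (S.P b t).coeff l * (-(mom lam ((l:ℤ)+(k+(j:ℤ))-1) t))))) t :=
    hD.congr_of_eventuallyEq (Filter.eventuallyEq_of_mem (Ioi_mem_nhds ht) hform)
  -- now rewrite the derivative value
  have hval : (∑ j ∈ Finset.range (a+1), ∑ l ∈ Finset.range (b+1),
      (da j * ((S.P b t).coeff l * mom lam ((l:ℤ)+(k+(j:ℤ))) t)
        + (S.P a t).coeff j * (db l * mom lam ((l:ℤ)+(k+(j:ℤ))) t
          + (S.P b t).coeff l * (-(mom lam ((l:ℤ)+(k+(j:ℤ))-1) t)))))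
      = Jk lam (pa * S.P b t) k t + Jk lam (pb * S.P a t) k t
        - Jk lam (S.P a t * S.P b t) (k-1) t := by
    have e1 : Jk lam (pa * S.P b t) k t = ∑ j ∈ Finset.range (a+1),
        ∑ l ∈ Finset.range (b+1), da j * ((S.P b t).coeff l * mom lam ((l:ℤ)+(k+(j:ℤ))) t) := by
      rw [hpa, J2_eq S.moments _ _ (a := a+1) (coeffpoly_natDegree da (a+1) (by omega)) k ht]
      refine Finset.sum_congr rfl fun j hj => ?_
      rw [coeffpoly_coeff, if_pos (Finset.mem_range.1 hj), Jk_P_eq_mom_sum S b _ ht,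
        Finset.mul_sum]
    have e2 : Jk lam (pb * S.P a t) k t = ∑ j ∈ Finset.range (a+1),
        ∑ l ∈ Finset.range (b+1),
          (S.P a t).coeff j * (db l * mom lam ((l:ℤ)+(k+(j:ℤ))) t) := by
      have e2' : Jk lam (pb * S.P a t) k t = ∑ m ∈ Finset.range (b+1),
          ∑ l ∈ Finset.range (a+1), db m * ((S.P a t).coeff l * mom lam ((l:ℤ)+(k+(m:ℤ))) t) := by
        rw [hpb, J2_eq S.moments _ _ (a := b+1) (coeffpoly_natDegree db (b+1) (by omega)) k ht]
        refine Finset.sum_congr rfl fun mm hm => ?_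
        rw [coeffpoly_coeff, if_pos (Finset.mem_range.1 hm), Jk_P_eq_mom_sum S a _ ht,
          Finset.mul_sum]
      rw [e2', Finset.sum_comm]
      refine Finset.sum_congr rfl fun j _ => Finset.sum_congr rfl fun l _ => ?_
      rw [show ((j:ℤ)+(k+(l:ℤ))) = ((l:ℤ)+(k+(j:ℤ))) by ring]
      ring
    have e3 : Jk lam (S.P a t * S.P b t) (k-1) t = ∑ j ∈ Finset.range (a+1),
        ∑ l ∈ Finset.range (b+1),
          (S.P a t).coeff j * ((S.P b t).coeff l * mom lam ((l:ℤ)+(k+(j:ℤ))-1) t) := by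
      rw [J2_eq S.moments _ _ (a := a+1) (by rw [S.natDegree_eq a t ht]; omega) (k-1) ht]
      refine Finset.sum_congr rfl fun j _ => ?_
      rw [Jk_P_eq_mom_sum S b _ ht, Finset.mul_sum]
      refine Finset.sum_congr rfl fun l _ => ?_
      rw [show ((l:ℤ)+(k-1+(j:ℤ))) = ((l:ℤ)+(k+(j:ℤ))-1) by ring]
    rw [e1, e2, e3, ← Finset.sum_add_distrib, ← Finset.sum_sub_distrib]
    refine Finset.sum_congr rfl fun j _ => ?_
    rw [← Finset.sum_add_distrib, ← Finset.sum_sub_distrib]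
    refine Finset.sum_congr rfl fun l _ => ?_
    ring
  rw [hval] at hkey
  exact hkey

end SP

theorem statement16 (lam t : ℝ) (hlam : 0 ≤ lam) (ht : 0 < t)
    (S : SingLaguerreOPS lam) (n : ℕ) (hn : 1 ≤ n) :
    ∃ d : ℝ, HasDerivAt (S.α n) d t
      ∧ t * d = S.α n t + 2 * S.β n t * (S.α n t + S.α (n-1) t)
                  - 2 * S.β (n+1) t * (S.α n t + S.α (n+1) t) := by
  obtain ⟨n', rfl⟩ : ∃ n', n = n'+1 := ⟨n-1, by omega⟩
  simp only [Nat.add_sub_cancel]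
  set cd : ℕ → ℝ := fun j => deriv (fun u => (S.P (n'+1) u).coeff j) t with hcd
  set ce : ℕ → ℝ := fun j => deriv (fun u => (S.P n' u).coeff j) t with hce
  have hda : ∀ j : ℕ, HasDerivAt (fun u => (S.P (n'+1) u).coeff j) (cd j) t :=
    fun j => (SP.diff_coeff S (n'+1) j ht).hasDerivAt
  have hdb : ∀ j : ℕ, HasDerivAt (fun u => (S.P n' u).coeff j) (ce j) t :=
    fun j => (SP.diff_coeff S n' j ht).hasDerivAt
  have hcdN : cd (n'+1) = 0 := by
    have h1 : (fun u => (S.P (n'+1) u).coeff (n'+1)) =ᶠ[nhds t] (fun _ => (1:ℝ)) :=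
      Filter.eventuallyEq_of_mem (Ioi_mem_nhds ht) (fun u hu => SP.coeff_P_self S hu)
    rw [hcd]
    simp only []
    rw [h1.deriv_eq, deriv_const]
  set Pd : Polynomial ℝ := ∑ j ∈ Finset.range (n'+1+1), Polynomial.C (cd j) * Polynomial.X ^ j
    with hPd
  set Pe : Polynomial ℝ := ∑ j ∈ Finset.range (n'+1), Polynomial.C (ce j) * Polynomial.X ^ j
    with hPe
  have hPdDeg : Pd.natDegree ≤ n' := by
    rw [hPd, Polynomial.natDegree_le_iff_coeff_eq_zero]
    intro e he
    rw [SP.coeffpoly_coeff]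
    by_cases h : e < n'+1+1
    · have he' : e = n'+1 := by omega
      rw [if_pos h, he', hcdN]
    · rw [if_neg h]
  have hPeDeg : Pe.natDegree < n'+1 := by
    rw [hPe]; exact SP.coeffpoly_natDegree _ _ (by omega)
  have h1pos := S.h_pos (n'+1) t ht
  have h0pos := S.h_pos n' t ht
  -- derivative of h (n'+1)
  have hH : HasDerivAt (fun u => S.h (n'+1) u)
      (-(SP.Jk lam (S.P (n'+1) t * S.P (n'+1) t) (-1) t)) t := by
    have hJ := SP.hasDerivAt_J2 S (n'+1) (n'+1) Pd Pd 0 ht cd cd hda hda hPd hPd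
    have hzero : SP.Jk lam (Pd * S.P (n'+1) t) 0 t = 0 := by
      rw [SP.J_L S ht (n'+1) Pd (n'+1) (le_trans hPdDeg (by omega)) le_rfl, hPd,
        SP.coeffpoly_coeff, if_pos (by omega), hcdN, zero_mul]
    rw [hzero, show (0:ℤ)-1 = -1 by norm_num] at hJ
    have heq : (fun u => S.h (n'+1) u) =ᶠ[nhds t]
        (fun u => SP.Jk lam (S.P (n'+1) u * S.P (n'+1) u) 0 u) :=
      Filter.eventuallyEq_of_mem (Ioi_mem_nhds ht) (fun u hu => SP.h_eq_J S _ hu)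
    have hfin := hJ.congr_of_eventuallyEq heq
    simpa using hfin
  -- derivative of T = ∫ y P² w
  have hT : HasDerivAt (fun u => SP.Jk lam (S.P (n'+1) u * S.P (n'+1) u) 1 u)
      (cd n' * S.h (n'+1) t + cd n' * S.h (n'+1) t - S.h (n'+1) t) t := by
    have hJ := SP.hasDerivAt_J2 S (n'+1) (n'+1) Pd Pd 1 ht cd cd hda hda hPd hPd
    have hval : SP.Jk lam (Pd * S.P (n'+1) t) 1 t = cd n' * S.h (n'+1) t := by
      have hsh : SP.Jk lam (Polynomial.X * (Pd * S.P (n'+1) t)) 0 t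
          = SP.Jk lam (Pd * S.P (n'+1) t) (0+1) t := SP.Jk_shift _ _ _
      rw [show (0:ℤ)+1 = 1 by norm_num] at hsh
      rw [← hsh, ← mul_assoc]
      have hdeg : (Polynomial.X * Pd).natDegree ≤ n'+1 := by
        apply le_trans Polynomial.natDegree_mul_le
        rw [Polynomial.natDegree_X]
        omega
      rw [SP.J_L S ht (n'+1) _ (n'+1) hdeg le_rfl]
      congr 1
      rcases Nat.eq_zero_or_pos (n'+1) with h | _
      · omega
      · rw [Polynomial.coeff_X_mul, hPd, SP.coeffpoly_coeff, if_pos (by omega)]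
    have hval0 : SP.Jk lam (S.P (n'+1) t * S.P (n'+1) t) (1-1) t = S.h (n'+1) t := by
      rw [show (1:ℤ)-1 = 0 by norm_num, ← SP.h_eq_J S _ ht]
    rw [hval, hval0] at hJ
    exact hJ
  -- cross derivative: gives cd n' * h n' = aa
  have hcc : cd n' * S.h n' t = SP.Jk lam (S.P (n'+1) t * S.P n' t) (-1) t := by
    have hcross := SP.hasDerivAt_J2 S (n'+1) n' Pd Pe 0 ht cd ce hda hdb hPd hPe
    have hcross0 : HasDerivAt (fun u => SP.Jk lam (S.P (n'+1) u * S.P n' u) 0 u) 0 t := by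
      have heq : (fun u => SP.Jk lam (S.P (n'+1) u * S.P n' u) 0 u) =ᶠ[nhds t]
          (fun _ => (0:ℝ)) :=
        Filter.eventuallyEq_of_mem (Ioi_mem_nhds ht) (fun u hu => by
          rw [SP.J_orth S _ _ hu, if_neg (by omega)])
      exact (hasDerivAt_const t (0:ℝ)).congr_of_eventuallyEq heq
    have hu := hcross0.unique hcross
    have hv1 : SP.Jk lam (Pd * S.P n' t) 0 t = cd n' * S.h n' t := by
      rw [SP.J_L S ht n' Pd n' hPdDeg le_rfl, hPd, SP.coeffpoly_coeff, if_pos (by omega)]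
    have hv2 : SP.Jk lam (Pe * S.P (n'+1) t) 0 t = 0 := by
      rw [SP.J_L S ht (n'+1) Pe (n'+1) (by omega) le_rfl, hPe, SP.coeffpoly_coeff,
        if_neg (by omega), zero_mul]
    rw [hv1, hv2, show (0:ℤ)-1 = -1 by norm_num] at hu
    linarith
  -- α as a quotient
  have halpha : ∀ u, 0 < u → S.α (n'+1) u
      = SP.Jk lam (S.P (n'+1) u * S.P (n'+1) u) 1 u / S.h (n'+1) u := by
    intro u hu
    have h1 := SP.alpha_h S (n'+1) hu
    have h2 : SP.Jk lam ((Polynomial.X * S.P (n'+1) u) * S.P (n'+1) u) 0 u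
        = SP.Jk lam (S.P (n'+1) u * S.P (n'+1) u) (0+1) u := by
      rw [← SP.Jk_shift, mul_assoc]
    rw [h2, show (0:ℤ)+1 = 1 by norm_num] at h1
    rw [eq_div_iff (ne_of_gt (S.h_pos (n'+1) u hu))]
    linarith [h1]
  have Tval : SP.Jk lam (S.P (n'+1) t * S.P (n'+1) t) 1 t
      = S.α (n'+1) t * S.h (n'+1) t := by
    rw [halpha t ht, div_mul_cancel₀ _ (ne_of_gt h1pos)]
  -- the derivative of α
  have hAl : HasDerivAt (S.α (n'+1))
      (((cd n' * S.h (n'+1) t + cd n' * S.h (n'+1) t - S.h (n'+1) t) * S.h (n'+1) t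
        - S.α (n'+1) t * S.h (n'+1) t
          * -(SP.Jk lam (S.P (n'+1) t * S.P (n'+1) t) (-1) t)) / S.h (n'+1) t ^ 2) t := by
    have hdiv := hT.div hH (ne_of_gt h1pos)
    rw [Tval] at hdiv
    exact hdiv.congr_of_eventuallyEq (Filter.eventuallyEq_of_mem (Ioi_mem_nhds ht)
      (fun u hu => halpha u hu))
  refine ⟨_, hAl, ?_⟩
  -- the nonlinear identities
  have hb1 : S.h (n'+1) t = S.β (n'+1) t * S.h n' t := SP.beta_h S n' ht
  have hb2 : S.h (n'+1+1) t = S.β (n'+1+1) t * S.h (n'+1) t := SP.beta_h S (n'+1) ht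
  have hIV1 := SP.IV S hlam n' ht
  have hIV2 := SP.IV S hlam (n'+1) ht
  have hpp := SP.coeff_rec S n' ht
  have hV : S.h (n'+1) t = SP.Jk lam (S.P (n'+1+1) t * S.P (n'+1) t) (-1) t
      + S.α (n'+1) t * SP.Jk lam (S.P (n'+1) t * S.P (n'+1) t) (-1) t
      + S.β (n'+1) t * SP.Jk lam (S.P (n'+1) t * S.P n' t) (-1) t := by
    have hv := SP.V_id S (n'+1) ht
    rw [if_neg (Nat.succ_ne_zero n'), Nat.add_sub_cancel, mul_comm (S.P n' t)] at hv
    exact hv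
  rw [mul_div_assoc', div_eq_iff (by positivity)]
  linear_combination (2*t*(S.β (n'+1) t)*(S.h (n'+1) t)) * hcc
    + ((S.β (n'+1) t)*(S.h (n'+1) t)) * hIV1
    - (S.h (n'+1) t) * hIV2
    + (S.h (n'+1) t)^2 * hpp
    - t*(S.h (n'+1) t) * hV
    + ((2*t*(cd n') - (S.P (n'+1) t).coeff n' - 2*(S.α n' t)*(S.β (n'+1) t))*(S.h (n'+1) t)) * hb1
    - 2*(S.α (n'+1+1) t)*(S.h (n'+1) t)*hb2
end
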